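/- If g ∈ O has order n in G, then the element x_g^n of S(G,O) lies in S(G,O)_1, i.e., α(x_g^n) = 1, and hence x_g^n is central in S(G,O). -/

import Mathlib

/-- The defining relations of the factorization semigroup `S(G,O)`:
`x_{g₁} ⬝ x_{g₂} = x_{g₂} ⬝ x_{g₂⁻¹ g₁ g₂}`. -/
inductive FactRel (G : Type) [Group G] (O : Set G) :
    FreeSemigroup {g : G // g ∈ O} → FreeSemigroup {g : G // g ∈ O} → Prop
  | rel (g₁ g₂ : {g : G // g ∈ O}) (h : (g₂ : G)⁻¹ * g₁ * g₂ ∈ O) :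
      FactRel G O (FreeSemigroup.of g₁ * FreeSemigroup.of g₂)
        (FreeSemigroup.of g₂ * FreeSemigroup.of ⟨(g₂ : G)⁻¹ * g₁ * g₂, h⟩)

/-- The factorization semigroup `S(G,O)`. -/
def FactS (G : Type) [Group G] (O : Set G) :=
  (conGen (FactRel G O)).Quotient

instance (G : Type) [Group G] (O : Set G) : Semigroup (FactS G O) :=
  Con.semigroup _

/-- The generator `x_g` of `S(G,O)`. -/
def xg {G : Type} [Group G] {O : Set G} (g : {g : G // g ∈ O}) : FactS G O :=
  (conGen (FactRel G O)).toQuotient (FreeSemigroup.of g)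

/-- `spow s n = s^(n+1)` : the `(n+1)`-fold product of `s` with itself. -/
def spow {S : Type} [Mul S] (s : S) : ℕ → S
  | 0 => s
  | n + 1 => spow s n * s

/-!
By the defining relations, `x_g` passes through any product `s` of generators at the cost of
conjugating `g` by `α s`, i.e. `x_g s = s x_{(α s)⁻¹ g (α s)}`. When `α s = 1` this says that `s`
commutes with every generator, hence is central. Finally `α (x_g^n) = g^n = 1` when `n` is the
order of `g`.
-/

theorem MulHom.map_spow {S M : Type} [Mul S] [Monoid M] (f : S →ₙ* M) (s : S) (n : ℕ) :
    f (spow s n) = f s ^ (n + 1) := by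
  induction n with
  | zero => simp [spow]
  | succ n ih => rw [spow, map_mul, ih, ← pow_succ]

namespace FactS

variable {G : Type} [Group G] {O : Set G} (hO : ∀ g ∈ O, ∀ h : G, h⁻¹ * g * h ∈ O)

def conjElem (g : {g : G // g ∈ O}) (h : G) : {g : G // g ∈ O} :=
  ⟨h⁻¹ * g * h, hO g g.2 h⟩

theorem conjElem_one (g : {g : G // g ∈ O}) : conjElem hO g 1 = g :=
  Subtype.ext (by simp [conjElem])

theorem conjElem_conjElem (g : {g : G // g ∈ O}) (h k : G) :
    conjElem hO (conjElem hO g h) k = conjElem hO g (h * k) :=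
  Subtype.ext (by simp [conjElem, mul_assoc])

theorem xg_mul_xg (g₁ g₂ : {g : G // g ∈ O}) :
    xg g₁ * xg g₂ = xg g₂ * xg (conjElem hO g₁ g₂) :=
  (Con.eq _).mpr (ConGen.Rel.of _ _ (FactRel.rel g₁ g₂ _))

theorem induction_on {P : FactS G O → Prop} (s : FactS G O) (of : ∀ g, P (xg g))
    (mul : ∀ s t, P s → P t → P (s * t)) : P s := by
  induction s using Con.induction_on with
  | H w =>
    induction w using FreeSemigroup.recOnMul with
    | ih1 g => exact of g
    | ih2 g w hg hw => exact mul _ _ hg hw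

variable (α : FactS G O →ₙ* G) (hα : ∀ g : {g : G // g ∈ O}, α (xg g) = (g : G))
include hO hα

theorem xg_mul_eq_mul_xg_conjElem (s : FactS G O) :
    ∀ g, xg g * s = s * xg (conjElem hO g (α s)) := by
  induction s using induction_on with
  | of a => intro g; rw [hα]; exact xg_mul_xg hO g a
  | mul s t hs ht =>
    intro g
    rw [← mul_assoc, hs, mul_assoc, ht, ← mul_assoc, conjElem_conjElem, map_mul]

theorem commute_of_map_eq_one {s : FactS G O} (hs : α s = 1) (t : FactS G O) :
    Commute s t := by
  induction t using induction_on with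
  | of g =>
    have h := xg_mul_eq_mul_xg_conjElem hO α hα s g
    rw [hs, conjElem_one] at h
    exact h.symm
  | mul t u ht hu => exact ht.mul_right hu

end FactS

theorem stmt9_general (G : Type) [Group G] (O : Set G)
    (hO : ∀ g ∈ O, ∀ h : G, h⁻¹ * g * h ∈ O)
    (α : FactS G O →ₙ* G) (hα : ∀ g : {g : G // g ∈ O}, α (xg g) = (g : G)) :
    ∀ (g : G) (hg : g ∈ O) (n : ℕ), orderOf g = n + 1 →
      α (spow (xg ⟨g, hg⟩) n) = 1 ∧
      ∀ t : FactS G O, spow (xg ⟨g, hg⟩) n * t = t * spow (xg ⟨g, hg⟩) n := by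
  intro g hg n hn
  have hpow : α (spow (xg ⟨g, hg⟩) n) = 1 := by
    rw [α.map_spow, hα, ← hn, pow_orderOf_eq_one]
  exact ⟨hpow, FactS.commute_of_map_eq_one hO α hα hpow⟩

theorem stmt9 (G : Type) [Group G] (O : Set G) (h1 : (1 : G) ∉ O)
    (hO : ∀ g ∈ O, ∀ h : G, h⁻¹ * g * h ∈ O)
    (α : FactS G O →ₙ* G) (hα : ∀ g : {g : G // g ∈ O}, α (xg g) = (g : G)) :
    ∀ (g : G) (hg : g ∈ O) (n : ℕ), orderOf g = n + 1 →
      α (spow (xg ⟨g, hg⟩) n) = 1 ∧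
      ∀ t : FactS G O, spow (xg ⟨g, hg⟩) n * t = t * spow (xg ⟨g, hg⟩) n :=
  stmt9_general G O hO α hα
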